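/- Let β = (1+√5)/2, T_β(x) = βx mod 1, and let X be a random variable on [0,1) whose CDF F has no jumps at the endpoints of the intervals I_{n,J}. Then for x ∈ [β^{−1}, 1), the CDF F_n of T_β^n(X) satisfies F_n(x) = ∑_{J=(j_1,...,j_n) ∈ Ω_n} [F(L_{n,J} + (1−j_n) x β^{−n} + j_n β^{−n−1}) − F(L_{n,J})]. -/

import Mathlib

open MeasureTheory Real Filter

/-- The golden ratio. -/
noncomputable def gr : ℝ := (1 + Real.sqrt 5) / 2

/-- Binary strings of length `n` with no two consecutive ones. -/
def Omega (n : ℕ) : Finset (Fin n → Fin 2) :=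
  Finset.univ.filter fun J =>
    ∀ k : Fin n, ∀ h : k.val + 1 < n, (J k : ℕ) * (J ⟨k.val + 1, h⟩ : ℕ) = 0

/-- `L (j_1,…,j_n) = ∑ j_k β^{-k}`. -/
noncomputable def L {n : ℕ} (J : Fin n → Fin 2) : ℝ :=
  ∑ k : Fin n, ((J k : ℕ) : ℝ) * gr ^ (-(k.val + 1 : ℤ))

/-- The last digit `j_n` of a string. -/
def lastD {n : ℕ} (J : Fin n → Fin 2) : ℕ :=
  if h : 0 < n then (J ⟨n - 1, Nat.sub_lt h one_pos⟩ : ℕ) else 0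

/-- The length of `I_{n,J}`. -/
noncomputable def Ilen {n : ℕ} (J : Fin n → Fin 2) : ℝ :=
  (lastD J : ℝ) * gr ^ (-(n + 1 : ℤ)) + (1 - (lastD J : ℝ)) * gr ^ (-(n : ℤ))

/-- The interval `I_{n,J}`. -/
noncomputable def Ival {n : ℕ} (J : Fin n → Fin 2) : Set ℝ :=
  Set.Ico (L J) (L J + Ilen J)

/-- The base-β transformation (β = golden ratio). -/
noncomputable def T (x : ℝ) : ℝ := gr * x - ⌊gr * x⌋

/-- The invariant density. -/
noncomputable def fGold (x : ℝ) : ℝ :=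
  if x < gr⁻¹ then (1 + gr) / Real.sqrt 5 else gr / Real.sqrt 5

/-- The pdf of `T^n X` when `X` has pdf `f`. -/
noncomputable def evolve (n : ℕ) (f : ℝ → ℝ) (x : ℝ) : ℝ :=
  if x < gr⁻¹ then ∑ J ∈ Omega n, gr ^ (-(n : ℤ)) * f (L J + x * gr ^ (-(n : ℤ)))
  else ∑ J ∈ (Omega n).filter (fun J => lastD J = 0),
    gr ^ (-(n : ℤ)) * f (L J + x * gr ^ (-(n : ℤ)))

/-! The admissible intervals refine one another by appending a digit: when `j_n = 0`,
`I_{n,J} = [L, L + β⁻ⁿ)` splits as `I_{n+1,J0} ⊔ I_{n+1,J1}` at `L + β⁻ⁿ⁻¹` (because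
`β⁻ⁿ⁻¹ + β⁻ⁿ⁻² = β⁻ⁿ`), and when `j_n = 1`, `I_{n,J} = I_{n+1,J0}`. Inducting along this
refinement, the `I_{n,J}`, `J ∈ Ω_n`, partition `[0, 1)` and `T^n y = βⁿ (y - L_{n,J})` on
`I_{n,J}`. Hence `{T^n X ≤ x}` is the disjoint union over `J` of the events
`X ∈ I_{n,J}, X ≤ L_{n,J} + x β⁻ⁿ`, which up to the (null) endpoints of `I_{n,J}` is
`L_{n,J} < X ≤ L_{n,J} + min (x β⁻ⁿ) |I_{n,J}|`; for `β⁻¹ ≤ x < 1` that minimum is the cutoff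
of the statement. -/

open Set

lemma gr_pos : 0 < gr := Real.goldenRatio_pos

lemma inv_gr_pos : 0 < gr⁻¹ := inv_pos.mpr gr_pos

lemma inv_gr_lt_one : gr⁻¹ < 1 := inv_lt_one_of_one_lt₀ Real.one_lt_goldenRatio

lemma inv_gr_add_inv_gr_sq : gr⁻¹ + gr⁻¹ ^ 2 = 1 := by
  have h : gr ^ 2 = gr + 1 := Real.goldenRatio_sq
  field_simp [gr_pos.ne']
  linarith

lemma inv_gr_pow_add_inv_gr_pow (n : ℕ) : gr⁻¹ ^ (n + 1) + gr⁻¹ ^ (n + 2) = gr⁻¹ ^ n := by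
  linear_combination gr⁻¹ ^ n * inv_gr_add_inv_gr_sq

lemma gr_zpow_neg_natCast (m : ℕ) : gr ^ (-(m : ℤ)) = gr⁻¹ ^ m := by
  rw [zpow_neg, zpow_natCast, inv_pow]

lemma gr_zpow_neg_natCast_add_one (m : ℕ) : gr ^ (-(m + 1 : ℤ)) = gr⁻¹ ^ (m + 1) :=
  mod_cast gr_zpow_neg_natCast (m + 1)

section Cylinders

variable {n : ℕ}

lemma lastD_eq_zero_or_one (J : Fin n → Fin 2) : lastD J = 0 ∨ lastD J = 1 := by
  unfold lastD
  split <;> omega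

lemma lastD_snoc (J : Fin n → Fin 2) (j : Fin 2) :
    lastD (Fin.snoc J j : Fin (n + 1) → Fin 2) = j := by
  simp [lastD, Fin.snoc]

lemma lastD_succ (J : Fin (n + 1) → Fin 2) : lastD J = J (Fin.last n) := by
  simp [lastD, Fin.last]

lemma L_zero (J : Fin 0 → Fin 2) : L J = 0 := by simp [L]

lemma L_snoc (J : Fin n → Fin 2) (j : Fin 2) :
    L (Fin.snoc J j : Fin (n + 1) → Fin 2) = L J + (j : ℕ) * gr⁻¹ ^ (n + 1) := by
  simp only [L, Fin.sum_univ_castSucc, Fin.snoc_castSucc, Fin.snoc_last, Fin.val_castSucc,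
    Fin.val_last, gr_zpow_neg_natCast_add_one]

lemma Ilen_eq (J : Fin n → Fin 2) :
    Ilen J = lastD J * gr⁻¹ ^ (n + 1) + (1 - lastD J) * gr⁻¹ ^ n := by
  rw [Ilen, gr_zpow_neg_natCast, gr_zpow_neg_natCast_add_one]

lemma Ilen_of_lastD_eq_zero {J : Fin n → Fin 2} (h : lastD J = 0) : Ilen J = gr⁻¹ ^ n := by
  simp [Ilen_eq, h]

lemma Ilen_of_lastD_eq_one {J : Fin n → Fin 2} (h : lastD J = 1) :
    Ilen J = gr⁻¹ ^ (n + 1) := by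
  simp [Ilen_eq, h]

lemma Ilen_zero (J : Fin 0 → Fin 2) : Ilen J = 1 := by
  simp [Ilen_of_lastD_eq_zero (by simp [lastD] : lastD J = 0)]

lemma Ilen_le (J : Fin n → Fin 2) : Ilen J ≤ gr⁻¹ ^ n := by
  rcases lastD_eq_zero_or_one J with h | h
  · rw [Ilen_of_lastD_eq_zero h]
  · rw [Ilen_of_lastD_eq_one h, pow_succ]
    exact mul_le_of_le_one_right (pow_nonneg inv_gr_pos.le n) inv_gr_lt_one.le

lemma inv_gr_pow_succ_le_Ilen (J : Fin n → Fin 2) : gr⁻¹ ^ (n + 1) ≤ Ilen J := by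
  rcases lastD_eq_zero_or_one J with h | h
  · rw [Ilen_of_lastD_eq_zero h, pow_succ]
    exact mul_le_of_le_one_right (pow_nonneg inv_gr_pos.le n) inv_gr_lt_one.le
  · rw [Ilen_of_lastD_eq_one h]

lemma Ival_zero (J : Fin 0 → Fin 2) : Ival J = Ico 0 1 := by
  simp [Ival, L_zero, Ilen_zero]

lemma Ival_of_lastD_eq_zero {J : Fin n → Fin 2} (h : lastD J = 0) :
    Ival J = Ico (L J) (L J + gr⁻¹ ^ n) := by
  rw [Ival, Ilen_of_lastD_eq_zero h]

lemma Ival_of_lastD_eq_one {J : Fin n → Fin 2} (h : lastD J = 1) :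
    Ival J = Ico (L J) (L J + gr⁻¹ ^ (n + 1)) := by
  rw [Ival, Ilen_of_lastD_eq_one h]

lemma Ival_snoc_zero (J : Fin n → Fin 2) :
    Ival (Fin.snoc J 0 : Fin (n + 1) → Fin 2) = Ico (L J) (L J + gr⁻¹ ^ (n + 1)) := by
  rw [Ival_of_lastD_eq_zero (lastD_snoc J 0), L_snoc]
  simp

lemma Ival_snoc_one (J : Fin n → Fin 2) :
    Ival (Fin.snoc J 1 : Fin (n + 1) → Fin 2) =
      Ico (L J + gr⁻¹ ^ (n + 1)) (L J + gr⁻¹ ^ n) := by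
  rw [Ival_of_lastD_eq_one (lastD_snoc J 1), L_snoc, ← inv_gr_pow_add_inv_gr_pow n]
  simp [add_assoc]

lemma mem_Omega_succ_iff (J : Fin (n + 1) → Fin 2) :
    J ∈ Omega (n + 1) ↔ ∀ k : Fin n, (J k.castSucc : ℕ) * J k.succ = 0 := by
  simp only [Omega, Finset.mem_filter, Finset.mem_univ, true_and]
  constructor
  · intro h k
    exact h k.castSucc (by simp)
  · intro h k hk
    exact h ⟨k, by omega⟩

lemma snoc_mem_Omega_iff (J : Fin n → Fin 2) (j : Fin 2) :
    (Fin.snoc J j : Fin (n + 1) → Fin 2) ∈ Omega (n + 1) ↔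
      J ∈ Omega n ∧ lastD J * j = 0 := by
  rw [mem_Omega_succ_iff]
  cases n with
  | zero =>
    exact ⟨fun _ => ⟨Finset.mem_filter.mpr ⟨Finset.mem_univ _, fun k => k.elim0⟩, by simp [lastD]⟩,
      fun _ k => k.elim0⟩
  | succ m =>
    rw [Fin.forall_fin_succ', mem_Omega_succ_iff, lastD_succ]
    simp [Fin.succ_castSucc, -Fin.castSucc_succ]

lemma Ival_snoc_subset {J : Fin n → Fin 2} {j : Fin 2}
    (hJj : (Fin.snoc J j : Fin (n + 1) → Fin 2) ∈ Omega (n + 1)) :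
    Ival (Fin.snoc J j : Fin (n + 1) → Fin 2) ⊆ Ival J := by
  obtain rfl | rfl : j = 0 ∨ j = 1 := by omega
  · rw [Ival_snoc_zero, Ival]
    exact Ico_subset_Ico le_rfl (by linarith [inv_gr_pow_succ_le_Ilen J])
  · have hlast : lastD J = 0 := by simpa using ((snoc_mem_Omega_iff J 1).mp hJj).2
    rw [Ival_snoc_one, Ival_of_lastD_eq_zero hlast]
    exact Ico_subset_Ico (by linarith [pow_pos inv_gr_pos (n + 1)]) le_rfl

lemma disjoint_Ival_snoc (J : Fin n → Fin 2) {i j : Fin 2} (hij : i ≠ j) :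
    Disjoint (Ival (Fin.snoc J i : Fin (n + 1) → Fin 2))
      (Ival (Fin.snoc J j : Fin (n + 1) → Fin 2)) := by
  obtain ⟨rfl, rfl⟩ | ⟨rfl, rfl⟩ : i = 0 ∧ j = 1 ∨ i = 1 ∧ j = 0 := by omega
  · rw [Ival_snoc_zero, Ival_snoc_one]
    exact Ico_disjoint_Ico_same
  · rw [Ival_snoc_zero, Ival_snoc_one]
    exact Ico_disjoint_Ico_same.symm

lemma exists_snoc_mem_Ival {J : Fin n → Fin 2} (hJ : J ∈ Omega n) {y : ℝ} (hy : y ∈ Ival J) :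
    ∃ j, (Fin.snoc J j : Fin (n + 1) → Fin 2) ∈ Omega (n + 1) ∧
      y ∈ Ival (Fin.snoc J j : Fin (n + 1) → Fin 2) := by
  rcases lastD_eq_zero_or_one J with hlast | hlast
  · rw [Ival_of_lastD_eq_zero hlast] at hy
    by_cases hy' : y < L J + gr⁻¹ ^ (n + 1)
    · refine ⟨0, (snoc_mem_Omega_iff J 0).mpr ⟨hJ, by simp⟩, ?_⟩
      rw [Ival_snoc_zero]
      exact ⟨hy.1, hy'⟩
    · refine ⟨1, (snoc_mem_Omega_iff J 1).mpr ⟨hJ, by simp [hlast]⟩, ?_⟩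
      rw [Ival_snoc_one]
      exact ⟨not_lt.mp hy', hy.2⟩
  · refine ⟨0, (snoc_mem_Omega_iff J 0).mpr ⟨hJ, by simp⟩, ?_⟩
    rwa [Ival_snoc_zero, ← Ival_of_lastD_eq_one hlast]

lemma exists_mem_Ival (n : ℕ) {y : ℝ} (hy : y ∈ Ico (0 : ℝ) 1) : ∃ J ∈ Omega n, y ∈ Ival J := by
  induction n with
  | zero => exact ⟨Fin.elim0, Finset.mem_filter.mpr ⟨Finset.mem_univ _, fun k => k.elim0⟩,
      by rwa [Ival_zero]⟩
  | succ n ih =>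
    obtain ⟨J, hJ, hyJ⟩ := ih
    obtain ⟨j, hJj, hyJj⟩ := exists_snoc_mem_Ival hJ hyJ
    exact ⟨_, hJj, hyJj⟩

lemma pairwiseDisjoint_Ival (n : ℕ) :
    (Omega n : Set (Fin n → Fin 2)).PairwiseDisjoint Ival := by
  induction n with
  | zero => exact fun J _ K _ hJK => absurd (Subsingleton.elim J K) hJK
  | succ n ih =>
    intro J' hJ' K' hK' hJK
    obtain ⟨J, j, rfl⟩ : ∃ J j, J' = Fin.snoc J j := ⟨_, _, (Fin.snoc_init_self J').symm⟩
    obtain ⟨K, k, rfl⟩ : ∃ K k, K' = Fin.snoc K k := ⟨_, _, (Fin.snoc_init_self K').symm⟩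
    by_cases hJK' : J = K
    · subst hJK'
      exact disjoint_Ival_snoc J fun hjk => hJK (by rw [hjk])
    · exact (ih ((snoc_mem_Omega_iff J j).mp hJ').1 ((snoc_mem_Omega_iff K k).mp hK').1 hJK').mono
        (Ival_snoc_subset hJ') (Ival_snoc_subset hK')

lemma T_eq_of_sub_mem_Ico {z : ℝ} {j : ℕ} (h : gr * z - j ∈ Ico (0 : ℝ) 1) :
    T z = gr * z - j := by
  have hfloor : ⌊gr * z⌋ = j :=
    Int.floor_eq_iff.mpr (by push_cast; constructor <;> linarith [h.1, h.2])
  rw [T, hfloor, Int.cast_natCast]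

lemma gr_pow_mul_sub_L_mem_Ico {J : Fin n → Fin 2} {y : ℝ} (hy : y ∈ Ival J) :
    gr ^ n * (y - L J) ∈ Ico (0 : ℝ) 1 := by
  have hpos : 0 < gr ^ n := pow_pos gr_pos n
  refine ⟨mul_nonneg hpos.le (by linarith [hy.1]), ?_⟩
  calc gr ^ n * (y - L J) < gr ^ n * gr⁻¹ ^ n :=
        mul_lt_mul_of_pos_left (by linarith [hy.2, Ilen_le J]) hpos
    _ = 1 := by rw [← mul_pow, mul_inv_cancel₀ gr_pos.ne', one_pow]

lemma iterate_T_of_mem_Ival {J : Fin n → Fin 2} (hJ : J ∈ Omega n) {y : ℝ} (hy : y ∈ Ival J) :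
    T^[n] y = gr ^ n * (y - L J) := by
  induction n generalizing y with
  | zero => simp [L_zero]
  | succ n ih =>
    obtain ⟨J, j, rfl⟩ : ∃ J₀ j, J = Fin.snoc J₀ j := ⟨_, _, (Fin.snoc_init_self J).symm⟩
    have hJ₀ := ((snoc_mem_Omega_iff J j).mp hJ).1
    have hinv : gr ^ (n + 1) * gr⁻¹ ^ (n + 1) = 1 := by
      rw [← mul_pow, mul_inv_cancel₀ gr_pos.ne', one_pow]
    have hstep : gr * (gr ^ n * (y - L J)) - (j : ℕ) =
        gr ^ (n + 1) * (y - L (Fin.snoc J j : Fin (n + 1) → Fin 2)) := by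
      rw [L_snoc]
      linear_combination ((j : ℕ) : ℝ) * hinv
    rw [Function.iterate_succ_apply', ih hJ₀ (Ival_snoc_subset hJ hy), ← hstep,
      T_eq_of_sub_mem_Ico (hstep ▸ gr_pow_mul_sub_L_mem_Ico hy)]

lemma iterate_T_le_iff {J : Fin n → Fin 2} (hJ : J ∈ Omega n) {x y : ℝ} (hy : y ∈ Ival J) :
    T^[n] y ≤ x ↔ y ≤ L J + x * gr⁻¹ ^ n := by
  rw [iterate_T_of_mem_Ival hJ hy, ← le_div_iff₀' (pow_pos gr_pos n), div_eq_mul_inv, ← inv_pow,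
    sub_le_iff_le_add']

lemma iterate_T_le_iff_exists (n : ℕ) {x y : ℝ} (hy : y ∈ Ico (0 : ℝ) 1) :
    T^[n] y ≤ x ↔ ∃ J ∈ Omega n, y ∈ Ival J ∧ y ≤ L J + x * gr⁻¹ ^ n := by
  constructor
  · intro hyx
    obtain ⟨J, hJ, hyJ⟩ := exists_mem_Ival n hy
    exact ⟨J, hJ, hyJ, (iterate_T_le_iff hJ hyJ).mp hyx⟩
  · rintro ⟨J, hJ, hyJ, hyx⟩
    exact (iterate_T_le_iff hJ hyJ).mpr hyx

lemma cutoff_eq_min (J : Fin n → Fin 2) {x : ℝ} (hx : x ∈ Ico gr⁻¹ 1) :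
    (1 - (lastD J : ℝ)) * x * gr ^ (-(n : ℤ)) + (lastD J : ℝ) * gr ^ (-(n + 1 : ℤ)) =
      min (x * gr⁻¹ ^ n) (Ilen J) := by
  have hpos : 0 < gr⁻¹ ^ n := pow_pos inv_gr_pos n
  rw [gr_zpow_neg_natCast, gr_zpow_neg_natCast_add_one]
  rcases lastD_eq_zero_or_one J with h | h
  · rw [Ilen_of_lastD_eq_zero h, min_eq_left (by nlinarith [hx.2]), h]
    ring
  · rw [Ilen_of_lastD_eq_one h, min_eq_right (by rw [pow_succ']; nlinarith [hx.1]), h]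
    ring

end Cylinders

section Measure

variable {Ω : Type*} [MeasurableSpace Ω] {μ : Measure Ω} {X : Ω → ℝ}

lemma measureReal_preimage_Ioc [IsFiniteMeasure μ] (hX : Measurable X) {a b : ℝ} (hab : a ≤ b) :
    μ.real (X ⁻¹' Ioc a b) = μ.real {ω | X ω ≤ b} - μ.real {ω | X ω ≤ a} := by
  have hsplit : {ω | X ω ≤ b} = X ⁻¹' Iic a ∪ X ⁻¹' Ioc a b := by
    rw [← preimage_union, Iic_union_Ioc_eq_Iic hab]
    rfl
  rw [hsplit, measureReal_union ((Iic_disjoint_Ioc le_rfl).preimage X) (hX measurableSet_Ioc)]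
  simp only [preimage, mem_Iic, add_sub_cancel_left]

lemma preimage_Ico_inter_Iic_ae_eq {a e u : ℝ} (ha : μ {ω | X ω = a} = 0)
    (he : μ {ω | X ω = e} = 0) :
    X ⁻¹' (Ico a e ∩ Iic u) =ᵐ[μ] X ⁻¹' Ioc a (min u e) := by
  refine ae_eq_set.mpr ⟨measure_mono_null (fun ω hω => ?_) ha,
    measure_mono_null (fun ω hω => ?_) he⟩
  · simp only [Set.mem_sdiff, mem_preimage, mem_inter_iff, mem_Ico, mem_Iic, mem_Ioc, le_min_iff]
      at hω
    show X ω = a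
    by_contra hne
    exact hω.2 ⟨lt_of_le_of_ne hω.1.1.1 (Ne.symm hne), hω.1.2, hω.1.1.2.le⟩
  · simp only [Set.mem_sdiff, mem_preimage, mem_inter_iff, mem_Ico, mem_Iic, mem_Ioc, le_min_iff]
      at hω
    show X ω = e
    by_contra hne
    exact hω.2 ⟨⟨hω.1.1.le, lt_of_le_of_ne hω.1.2.2 hne⟩, hω.1.2.1⟩

end Measure

theorem cdf_remainder_high_general {Ω : Type*} [MeasureSpace Ω]
    [IsProbabilityMeasure (volume : Measure Ω)]
    (X : Ω → ℝ) (hX : Measurable X) (hX01 : ∀ ω, X ω ∈ Set.Ico (0 : ℝ) 1)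
    (n : ℕ)
    (hnojump : ∀ J ∈ Omega n, volume {ω | X ω = L J} = 0 ∧
      volume {ω | X ω = L J + Ilen J} = 0) :
    ∀ x ∈ Set.Ico gr⁻¹ (1 : ℝ),
      (volume {ω | T^[n] (X ω) ≤ x}).toReal =
        ∑ J ∈ Omega n,
          ((volume {ω | X ω ≤ L J + (1 - (lastD J : ℝ)) * x * gr ^ (-(n : ℤ))
              + (lastD J : ℝ) * gr ^ (-(n + 1 : ℤ))}).toReal
            - (volume {ω | X ω ≤ L J}).toReal) := by
  intro x hx
  have hset : {ω | T^[n] (X ω) ≤ x} =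
      ⋃ J ∈ Omega n, X ⁻¹' (Ival J ∩ Iic (L J + x * gr⁻¹ ^ n)) := by
    ext ω
    simp only [mem_iUnion, mem_preimage, mem_inter_iff, mem_Iic, exists_prop]
    exact iterate_T_le_iff_exists n (hX01 ω)
  have hdisj : (Omega n : Set (Fin n → Fin 2)).PairwiseDisjoint
      fun J => X ⁻¹' (Ival J ∩ Iic (L J + x * gr⁻¹ ^ n)) := fun J hJ K hK hJK =>
    ((pairwiseDisjoint_Ival n hJ hK hJK).mono inter_subset_left inter_subset_left).preimage X
  simp only [← measureReal_def]
  rw [hset, measureReal_biUnion_finset hdisj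
    fun J _ => hX (measurableSet_Ico.inter measurableSet_Iic)]
  refine Finset.sum_congr rfl fun J hJ => ?_
  have hL : L J ≤ L J + min (x * gr⁻¹ ^ n) (Ilen J) := le_add_of_nonneg_right
    (le_min (mul_nonneg (inv_gr_pos.le.trans hx.1) (pow_pos inv_gr_pos n).le)
      (by linarith [inv_gr_pow_succ_le_Ilen J, pow_pos inv_gr_pos (n + 1)]))
  rw [Ival, measureReal_congr (preimage_Ico_inter_Iic_ae_eq (hnojump J hJ).1 (hnojump J hJ).2),
    min_add_add_left, measureReal_preimage_Ioc hX hL, add_assoc, cutoff_eq_min J hx]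

theorem cdf_remainder_high {Ω : Type*} [MeasureSpace Ω]
    [IsProbabilityMeasure (volume : Measure Ω)]
    (X : Ω → ℝ) (hX : Measurable X) (hX01 : ∀ ω, X ω ∈ Set.Ico (0 : ℝ) 1)
    (n : ℕ) (hn : 0 < n)
    (hnojump : ∀ J ∈ Omega n, volume {ω | X ω = L J} = 0 ∧
      volume {ω | X ω = L J + Ilen J} = 0) :
    ∀ x ∈ Set.Ico gr⁻¹ (1 : ℝ),
      (volume {ω | T^[n] (X ω) ≤ x}).toReal =
        ∑ J ∈ Omega n,
          ((volume {ω | X ω ≤ L J + (1 - (lastD J : ℝ)) * x * gr ^ (-(n : ℤ))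
              + (lastD J : ℝ) * gr ^ (-(n + 1 : ℤ))}).toReal
            - (volume {ω | X ω ≤ L J}).toReal) :=
  cdf_remainder_high_general X hX hX01 n hnojump
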